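/- arXiv:math/0402447 — 3 statements merged into one kernel-verified Lean document; each statement's English description precedes it below -/
import Mathlib

section
/- Let g ≥ 3 be an integer and work in the field ℚ(u,v) of rational functions in two variables over ℚ. Write q = uv and set G2 = (q^g−1)(q^{g−1}−1)/((q−1)(q²−1)), G3 = (q^g−1)(q^{g−1}−1)(q^{g−2}−1)/((q−1)(q²−1)(q³−1)), E⁺ = (q^g−1)(q^{g−1}−1)/((q−1)(q²−1)), E⁻ = q(q^{g−1}−1)(q^{g−2}−1)/((q−1)(q²−1)). Then the sum of the following eight rational functions: (i) [(1−u²v)^g(1−uv²)^g − q^{g+1}(1−u)^g(1−v)^g]/((1−q)(1−q²)) − (1/2)[(1−u)^g(1−v)^g/(1−q) + (1+u)^g(1+v)^g/(1+q)]; (ii) 2^{2g}(q⁵−q²)·G3·(q−1)/(q^{3g}−1); (iii) [(1/2)(1−u)^g(1−v)^g + (1/2)(1+u)^g(1+v)^g − 2^{2g}]·E⁺·(q−1)/(q^{g−1}−1) + (1/2)[(1−u)^g(1−v)^g − (1+u)^g(1+v)^g]·E⁻·(q−1)/(q^{g−1}−1); (iv) 2^{2g}·q^g·G2·(q−1)/(q^{2g−1}−1);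 (v) 2^{2g}(q²+q³+q⁴)·G3·(q−1)²/((q^{3g}−1)(q^{g−1}−1)); (vi) 2^{2g}·q²·((q^{g−2}−1)/(q−1))·G2·(q−1)²/((q^{3g}−1)(q^{2g−1}−1)); (vii) 2^{2g}(1+q)·q^{g−2}·G2·(q−1)²/((q^{g−1}−1)(q^{2g−1}−1)); (viii) 2^{2g}(1+q)·((q^{g−2}−1)/(q−1))·G2·(q−1)³/((q^{3g}−1)(q^{g−1}−1)(q^{2g−1}−1)); is equal to [(1−u²v)^g(1−uv²)^g − q^{g+1}(1−u)^g(1−v)^g]/((1−q)(1−q²)) − (q^{g−1}/2)·[(1−u)^g(1−v)^g/(1−q) − (1+u)^g(1+v)^g/(1+q)]. -/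
noncomputable section

/-- The field ℚ(u,v) of rational functions in two variables over ℚ. -/
abbrev QuvField : Type := FractionRing (MvPolynomial (Fin 2) ℚ)

/-- The image of the variable `u` in ℚ(u,v). -/
def uu : QuvField := algebraMap (MvPolynomial (Fin 2) ℚ) QuvField (MvPolynomial.X 0)

/-- The image of the variable `v` in ℚ(u,v). -/
def vv : QuvField := algebraMap (MvPolynomial (Fin 2) ℚ) QuvField (MvPolynomial.X 1)

/-- `q = uv`. -/
def qq : QuvField := uu * vv

/-- The E-polynomial of the Grassmannian Gr(2,g) evaluated at q = uv. -/
def G2 (g : ℕ) : QuvField :=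
  (qq ^ g - 1) * (qq ^ (g - 1) - 1) / ((qq - 1) * (qq ^ 2 - 1))

/-- The E-polynomial of the Grassmannian Gr(3,g) evaluated at q = uv. -/
def G3 (g : ℕ) : QuvField :=
  (qq ^ g - 1) * (qq ^ (g - 1) - 1) * (qq ^ (g - 2) - 1) /
    ((qq - 1) * (qq ^ 2 - 1) * (qq ^ 3 - 1))

/-- The E-polynomial of the invariant part of H^*(ℙ^{g-2} × ℙ^{g-2}). -/
def Eplus (g : ℕ) : QuvField :=
  (qq ^ g - 1) * (qq ^ (g - 1) - 1) / ((qq - 1) * (qq ^ 2 - 1))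

/-- The E-polynomial of the anti-invariant part of H^*(ℙ^{g-2} × ℙ^{g-2}). -/
def Eminus (g : ℕ) : QuvField :=
  qq * (qq ^ (g - 1) - 1) * (qq ^ (g - 2) - 1) / ((qq - 1) * (qq ^ 2 - 1))


lemma qq_pow_ne_one (n : ℕ) (hn : n ≠ 0) : qq ^ n - 1 ≠ 0 := by
  rw [sub_ne_zero]
  intro h
  have hinj := IsFractionRing.injective (MvPolynomial (Fin 2) ℚ) QuvField
  have : ((MvPolynomial.X 0 * MvPolynomial.X 1 : MvPolynomial (Fin 2) ℚ)) ^ n = 1 := by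
    apply hinj
    rw [map_pow, map_one, map_mul]
    exact h
  have h0 := congrArg (MvPolynomial.eval (fun _ => (0 : ℚ))) this
  simp [zero_pow hn] at h0

set_option maxHeartbeats 4000000 in
theorem stringy_E_function_sum (g : ℕ) (hg : 3 ≤ g) :
    -- (i) contribution of the smooth part M_0^s
    (((1 - uu ^ 2 * vv) ^ g * (1 - uu * vv ^ 2) ^ g
        - qq ^ (g + 1) * (1 - uu) ^ g * (1 - vv) ^ g) / ((1 - qq) * (1 - qq ^ 2))
      - (1 / 2) * ((1 - uu) ^ g * (1 - vv) ^ g / (1 - qq)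
        + (1 + uu) ^ g * (1 + vv) ^ g / (1 + qq)))
    -- (ii) contribution of D^(1)_0
    + 2 ^ (2 * g) * (qq ^ 5 - qq ^ 2) * G3 g * (qq - 1) / (qq ^ (3 * g) - 1)
    -- (iii) contribution of D^(2)_0
    + (((1 / 2) * (1 - uu) ^ g * (1 - vv) ^ g + (1 / 2) * (1 + uu) ^ g * (1 + vv) ^ g
          - 2 ^ (2 * g)) * Eplus g * (qq - 1) / (qq ^ (g - 1) - 1)
        + (1 / 2) * ((1 - uu) ^ g * (1 - vv) ^ g - (1 + uu) ^ g * (1 + vv) ^ g)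
          * Eminus g * (qq - 1) / (qq ^ (g - 1) - 1))
    -- (iv) contribution of D^(3)_0
    + 2 ^ (2 * g) * qq ^ g * G2 g * (qq - 1) / (qq ^ (2 * g - 1) - 1)
    -- (v) contribution of D^(1,2)_0
    + 2 ^ (2 * g) * (qq ^ 2 + qq ^ 3 + qq ^ 4) * G3 g * (qq - 1) ^ 2
        / ((qq ^ (3 * g) - 1) * (qq ^ (g - 1) - 1))
    -- (vi) contribution of D^(1,3)_0
    + 2 ^ (2 * g) * qq ^ 2 * ((qq ^ (g - 2) - 1) / (qq - 1)) * G2 g * (qq - 1) ^ 2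
        / ((qq ^ (3 * g) - 1) * (qq ^ (2 * g - 1) - 1))
    -- (vii) contribution of D^(2,3)_0
    + 2 ^ (2 * g) * (1 + qq) * qq ^ (g - 2) * G2 g * (qq - 1) ^ 2
        / ((qq ^ (g - 1) - 1) * (qq ^ (2 * g - 1) - 1))
    -- (viii) contribution of D^(1,2,3)_0
    + 2 ^ (2 * g) * (1 + qq) * ((qq ^ (g - 2) - 1) / (qq - 1)) * G2 g * (qq - 1) ^ 3
        / ((qq ^ (3 * g) - 1) * (qq ^ (g - 1) - 1) * (qq ^ (2 * g - 1) - 1))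
    =
    ((1 - uu ^ 2 * vv) ^ g * (1 - uu * vv ^ 2) ^ g
        - qq ^ (g + 1) * (1 - uu) ^ g * (1 - vv) ^ g) / ((1 - qq) * (1 - qq ^ 2))
      - (qq ^ (g - 1) / 2) * ((1 - uu) ^ g * (1 - vv) ^ g / (1 - qq)
        - (1 + uu) ^ g * (1 + vv) ^ g / (1 + qq)) := by

  obtain ⟨m, rfl⟩ := le_iff_exists_add.mp hg
  simp only [G2, G3, Eplus, Eminus,
    show 3 + m - 1 = m + 2 from by omega,
    show 3 + m - 2 = m + 1 from by omega,
    show 3 + m + 1 = m + 4 from by omega,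
    show 2 * (3 + m) - 1 = 2 * m + 5 from by omega,
    show 3 * (3 + m) = 3 * m + 9 from by omega]
  have p1 : qq ^ (3 + m) = qq ^ (m + 1) * qq ^ 2 := by ring
  have p2 : qq ^ (m + 2) = qq ^ (m + 1) * qq := by ring
  have p4 : qq ^ (m + 4) = qq ^ (m + 1) * qq ^ 3 := by ring
  have p5 : qq ^ (2 * m + 5) = (qq ^ (m + 1)) ^ 2 * qq ^ 3 := by ring
  have p6 : qq ^ (3 * m + 9) = (qq ^ (m + 1)) ^ 3 * qq ^ 6 := by ring
  rw [p1, p2, p4, p5, p6]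
  set x := qq ^ (m + 1) with hx
  have h1 : qq - 1 ≠ 0 := by have := qq_pow_ne_one 1 one_ne_zero; rwa [pow_one] at this
  have h1' : (1 : QuvField) - qq ≠ 0 := fun h => h1 (by rw [sub_eq_zero] at h ⊢; exact h.symm)
  have h2 : qq ^ 2 - 1 ≠ 0 := qq_pow_ne_one 2 two_ne_zero
  have h2' : (1 : QuvField) - qq ^ 2 ≠ 0 := fun h => h2 (by rw [sub_eq_zero] at h ⊢; exact h.symm)
  have hp1 : (1 : QuvField) + qq ≠ 0 := by
    intro h
    apply h2'
    have : (1 : QuvField) - qq ^ 2 = (1 + qq) * (1 - qq) := by ring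
    rw [this, h, zero_mul]
  have h3 : qq ^ 3 - 1 ≠ 0 := qq_pow_ne_one 3 three_ne_zero
  have h4 : x * qq - 1 ≠ 0 := by rw [hx, ← p2]; exact qq_pow_ne_one (m + 2) (by omega)
  have h5 : x ^ 2 * qq ^ 3 - 1 ≠ 0 := by rw [hx, ← p5]; exact qq_pow_ne_one (2 * m + 5) (by omega)
  have h6 : x ^ 3 * qq ^ 6 - 1 ≠ 0 := by rw [hx, ← p6]; exact qq_pow_ne_one (3 * m + 9) (by omega)
  have htwo : (2 : QuvField) ≠ 0 := two_ne_zero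
  have hD : (qq - 1) * (qq ^ 2 - 1) * (qq ^ 3 - 1) * (x * qq - 1) * (x ^ 2 * qq ^ 3 - 1) * (x ^ 3 * qq ^ 6 - 1) ≠ 0 :=
    mul_ne_zero (mul_ne_zero (mul_ne_zero (mul_ne_zero (mul_ne_zero h1 h2) h3) h4) h5) h6
  have g1 : (qq ^ 5 - qq ^ 2) * ((x * qq ^ 2 - 1) * (x * qq - 1) * (x - 1) / ((qq - 1) * (qq ^ 2 - 1) * (qq ^ 3 - 1))) * (qq - 1) / (x ^ 3 * qq ^ 6 - 1) = ((qq ^ 5 - qq ^ 2) * ((x * qq ^ 2 - 1) * (x * qq - 1) * (x - 1)) * (qq - 1) * ((x * qq - 1) * (x ^ 2 * qq ^ 3 - 1))) / ((qq - 1) * (qq ^ 2 - 1) * (qq ^ 3 - 1) * (x * qq - 1) * (x ^ 2 * qq ^ 3 - 1) * (x ^ 3 * qq ^ 6 - 1)) := by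
    have f : (qq ^ 5 - qq ^ 2) * ((x * qq ^ 2 - 1) * (x * qq - 1) * (x - 1) / ((qq - 1) * (qq ^ 2 - 1) * (qq ^ 3 - 1))) * (qq - 1) / (x ^ 3 * qq ^ 6 - 1) = ((qq ^ 5 - qq ^ 2) * ((x * qq ^ 2 - 1) * (x * qq - 1) * (x - 1)) * (qq - 1)) / (((qq - 1) * (qq ^ 2 - 1) * (qq ^ 3 - 1)) * (x ^ 3 * qq ^ 6 - 1)) := by
      simp only [div_eq_mul_inv, mul_inv]; ring
    rw [f, div_eq_div_iff (mul_ne_zero (mul_ne_zero (mul_ne_zero h1 h2) h3) h6) hD]; ring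
  have g2 : (x * qq ^ 2 - 1) * (x * qq - 1) / ((qq - 1) * (qq ^ 2 - 1)) * (qq - 1) / (x * qq - 1) = ((x * qq ^ 2 - 1) * (x * qq - 1) * (qq - 1) * ((qq ^ 3 - 1) * (x ^ 2 * qq ^ 3 - 1) * (x ^ 3 * qq ^ 6 - 1))) / ((qq - 1) * (qq ^ 2 - 1) * (qq ^ 3 - 1) * (x * qq - 1) * (x ^ 2 * qq ^ 3 - 1) * (x ^ 3 * qq ^ 6 - 1)) := by
    have f : (x * qq ^ 2 - 1) * (x * qq - 1) / ((qq - 1) * (qq ^ 2 - 1)) * (qq - 1) / (x * qq - 1) = ((x * qq ^ 2 - 1) * (x * qq - 1) * (qq - 1)) / (((qq - 1) * (qq ^ 2 - 1)) * (x * qq - 1)) := by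
      simp only [div_eq_mul_inv, mul_inv]; ring
    rw [f, div_eq_div_iff (mul_ne_zero (mul_ne_zero h1 h2) h4) hD]; ring
  have g3 : x * qq ^ 2 * ((x * qq ^ 2 - 1) * (x * qq - 1) / ((qq - 1) * (qq ^ 2 - 1))) * (qq - 1) / (x ^ 2 * qq ^ 3 - 1) = (x * qq ^ 2 * ((x * qq ^ 2 - 1) * (x * qq - 1)) * (qq - 1) * ((qq ^ 3 - 1) * (x * qq - 1) * (x ^ 3 * qq ^ 6 - 1))) / ((qq - 1) * (qq ^ 2 - 1) * (qq ^ 3 - 1) * (x * qq - 1) * (x ^ 2 * qq ^ 3 - 1) * (x ^ 3 * qq ^ 6 - 1)) := by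
    have f : x * qq ^ 2 * ((x * qq ^ 2 - 1) * (x * qq - 1) / ((qq - 1) * (qq ^ 2 - 1))) * (qq - 1) / (x ^ 2 * qq ^ 3 - 1) = (x * qq ^ 2 * ((x * qq ^ 2 - 1) * (x * qq - 1)) * (qq - 1)) / (((qq - 1) * (qq ^ 2 - 1)) * (x ^ 2 * qq ^ 3 - 1)) := by
      simp only [div_eq_mul_inv, mul_inv]; ring
    rw [f, div_eq_div_iff (mul_ne_zero (mul_ne_zero h1 h2) h5) hD]; ring
  have g4 : (qq ^ 2 + qq ^ 3 + qq ^ 4) * ((x * qq ^ 2 - 1) * (x * qq - 1) * (x - 1) / ((qq - 1) * (qq ^ 2 - 1) * (qq ^ 3 - 1))) * (qq - 1) ^ 2 / ((x ^ 3 * qq ^ 6 - 1) * (x * qq - 1)) = ((qq ^ 2 + qq ^ 3 + qq ^ 4) * ((x * qq ^ 2 - 1) * (x * qq - 1) * (x - 1)) * (qq - 1) ^ 2 * (x ^ 2 * qq ^ 3 - 1)) / ((qq - 1) * (qq ^ 2 - 1) * (qq ^ 3 - 1) * (x * qq - 1) * (x ^ 2 * qq ^ 3 - 1) * (x ^ 3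 * qq ^ 6 - 1)) := by
    have f : (qq ^ 2 + qq ^ 3 + qq ^ 4) * ((x * qq ^ 2 - 1) * (x * qq - 1) * (x - 1) / ((qq - 1) * (qq ^ 2 - 1) * (qq ^ 3 - 1))) * (qq - 1) ^ 2 / ((x ^ 3 * qq ^ 6 - 1) * (x * qq - 1)) = ((qq ^ 2 + qq ^ 3 + qq ^ 4) * ((x * qq ^ 2 - 1) * (x * qq - 1) * (x - 1)) * (qq - 1) ^ 2) / (((qq - 1) * (qq ^ 2 - 1) * (qq ^ 3 - 1)) * ((x ^ 3 * qq ^ 6 - 1) * (x * qq - 1))) := by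
      simp only [div_eq_mul_inv, mul_inv]; ring
    rw [f, div_eq_div_iff (mul_ne_zero (mul_ne_zero (mul_ne_zero h1 h2) h3) (mul_ne_zero h6 h4)) hD]; ring
  have g5 : qq ^ 2 * ((x - 1) / (qq - 1)) * ((x * qq ^ 2 - 1) * (x * qq - 1) / ((qq - 1) * (qq ^ 2 - 1))) * (qq - 1) ^ 2 / ((x ^ 3 * qq ^ 6 - 1) * (x ^ 2 * qq ^ 3 - 1)) = (qq ^ 2 * (x - 1) * ((x * qq ^ 2 - 1) * (x * qq - 1)) * (qq - 1) * ((qq ^ 3 - 1) * (x * qq - 1))) / ((qq - 1) * (qq ^ 2 - 1) * (qq ^ 3 - 1) * (x * qq - 1) * (x ^ 2 * qq ^ 3 - 1) * (x ^ 3 * qq ^ 6 - 1)) := by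
    have f : qq ^ 2 * ((x - 1) / (qq - 1)) * ((x * qq ^ 2 - 1) * (x * qq - 1) / ((qq - 1) * (qq ^ 2 - 1))) * (qq - 1) ^ 2 / ((x ^ 3 * qq ^ 6 - 1) * (x ^ 2 * qq ^ 3 - 1)) = (qq ^ 2 * (x - 1) * ((x * qq ^ 2 - 1) * (x * qq - 1)) * (qq - 1) ^ 2) / ((qq - 1) * ((qq - 1) * (qq ^ 2 - 1)) * ((x ^ 3 * qq ^ 6 - 1) * (x ^ 2 * qq ^ 3 - 1))) := by
      simp only [div_eq_mul_inv, mul_inv]; ring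
    rw [f, div_eq_div_iff (mul_ne_zero (mul_ne_zero h1 (mul_ne_zero h1 h2)) (mul_ne_zero h6 h5)) hD]; ring
  have g6 : (1 + qq) * x * ((x * qq ^ 2 - 1) * (x * qq - 1) / ((qq - 1) * (qq ^ 2 - 1))) * (qq - 1) ^ 2 / ((x * qq - 1) * (x ^ 2 * qq ^ 3 - 1)) = ((1 + qq) * x * ((x * qq ^ 2 - 1) * (x * qq - 1)) * (qq - 1) ^ 2 * ((qq ^ 3 - 1) * (x ^ 3 * qq ^ 6 - 1))) / ((qq - 1) * (qq ^ 2 - 1) * (qq ^ 3 - 1) * (x * qq - 1) * (x ^ 2 * qq ^ 3 - 1) * (x ^ 3 * qq ^ 6 - 1)) := by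
    have f : (1 + qq) * x * ((x * qq ^ 2 - 1) * (x * qq - 1) / ((qq - 1) * (qq ^ 2 - 1))) * (qq - 1) ^ 2 / ((x * qq - 1) * (x ^ 2 * qq ^ 3 - 1)) = ((1 + qq) * x * ((x * qq ^ 2 - 1) * (x * qq - 1)) * (qq - 1) ^ 2) / (((qq - 1) * (qq ^ 2 - 1)) * ((x * qq - 1) * (x ^ 2 * qq ^ 3 - 1))) := by
      simp only [div_eq_mul_inv, mul_inv]; ring
    rw [f, div_eq_div_iff (mul_ne_zero (mul_ne_zero h1 h2) (mul_ne_zero h4 h5)) hD]; ring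
  have g7 : (1 + qq) * ((x - 1) / (qq - 1)) * ((x * qq ^ 2 - 1) * (x * qq - 1) / ((qq - 1) * (qq ^ 2 - 1))) * (qq - 1) ^ 3 / ((x ^ 3 * qq ^ 6 - 1) * (x * qq - 1) * (x ^ 2 * qq ^ 3 - 1)) = ((1 + qq) * (x - 1) * ((x * qq ^ 2 - 1) * (x * qq - 1)) * (qq - 1) ^ 2 * (qq ^ 3 - 1)) / ((qq - 1) * (qq ^ 2 - 1) * (qq ^ 3 - 1) * (x * qq - 1) * (x ^ 2 * qq ^ 3 - 1) * (x ^ 3 * qq ^ 6 - 1)) := by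
    have f : (1 + qq) * ((x - 1) / (qq - 1)) * ((x * qq ^ 2 - 1) * (x * qq - 1) / ((qq - 1) * (qq ^ 2 - 1))) * (qq - 1) ^ 3 / ((x ^ 3 * qq ^ 6 - 1) * (x * qq - 1) * (x ^ 2 * qq ^ 3 - 1)) = ((1 + qq) * (x - 1) * ((x * qq ^ 2 - 1) * (x * qq - 1)) * (qq - 1) ^ 3) / ((qq - 1) * ((qq - 1) * (qq ^ 2 - 1)) * ((x ^ 3 * qq ^ 6 - 1) * (x * qq - 1) * (x ^ 2 * qq ^ 3 - 1))) := by
      simp only [div_eq_mul_inv, mul_inv]; ring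
    rw [f, div_eq_div_iff (mul_ne_zero (mul_ne_zero h1 (mul_ne_zero h1 h2)) (mul_ne_zero (mul_ne_zero h6 h4) h5)) hD]; ring
  have hT : (qq ^ 5 - qq ^ 2) * ((x * qq ^ 2 - 1) * (x * qq - 1) * (x - 1) / ((qq - 1) * (qq ^ 2 - 1) * (qq ^ 3 - 1))) * (qq - 1) / (x ^ 3 * qq ^ 6 - 1)
      - (x * qq ^ 2 - 1) * (x * qq - 1) / ((qq - 1) * (qq ^ 2 - 1)) * (qq - 1) / (x * qq - 1)
      + x * qq ^ 2 * ((x * qq ^ 2 - 1) * (x * qq - 1) / ((qq - 1) * (qq ^ 2 - 1))) * (qq - 1) / (x ^ 2 * qq ^ 3 - 1)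
      + (qq ^ 2 + qq ^ 3 + qq ^ 4) * ((x * qq ^ 2 - 1) * (x * qq - 1) * (x - 1) / ((qq - 1) * (qq ^ 2 - 1) * (qq ^ 3 - 1))) * (qq - 1) ^ 2 / ((x ^ 3 * qq ^ 6 - 1) * (x * qq - 1))
      + qq ^ 2 * ((x - 1) / (qq - 1)) * ((x * qq ^ 2 - 1) * (x * qq - 1) / ((qq - 1) * (qq ^ 2 - 1))) * (qq - 1) ^ 2 / ((x ^ 3 * qq ^ 6 - 1) * (x ^ 2 * qq ^ 3 - 1))
      + (1 + qq) * x * ((x * qq ^ 2 - 1) * (x * qq - 1) / ((qq - 1) * (qq ^ 2 - 1))) * (qq - 1) ^ 2 / ((x * qq - 1) * (x ^ 2 * qq ^ 3 - 1))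
      + (1 + qq) * ((x - 1) / (qq - 1)) * ((x * qq ^ 2 - 1) * (x * qq - 1) / ((qq - 1) * (qq ^ 2 - 1))) * (qq - 1) ^ 3 / ((x ^ 3 * qq ^ 6 - 1) * (x * qq - 1) * (x ^ 2 * qq ^ 3 - 1)) = 0 := by
    rw [g1, g2, g3, g4, g5, g6, g7]
    simp only [div_sub_div_same, ← add_div]
    rw [div_eq_zero_iff]
    exact Or.inl (by ring)
  have hA : (1 / 2 : QuvField) * ((x * qq ^ 2 - 1) * (x * qq - 1) / ((qq - 1) * (qq ^ 2 - 1))) * (qq - 1) / (x * qq - 1)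
      + (1 / 2) * (qq * (x * qq - 1) * (x - 1) / ((qq - 1) * (qq ^ 2 - 1))) * (qq - 1) / (x * qq - 1)
      = (1 / 2) * ((1 - x * qq) / (1 - qq)) := by
    field_simp
    ring
  have hB : (1 / 2 : QuvField) * ((x * qq ^ 2 - 1) * (x * qq - 1) / ((qq - 1) * (qq ^ 2 - 1))) * (qq - 1) / (x * qq - 1)
      - (1 / 2) * (qq * (x * qq - 1) * (x - 1) / ((qq - 1) * (qq ^ 2 - 1))) * (qq - 1) / (x * qq - 1)
      = (1 / 2) * ((1 + x * qq) / (1 + qq)) := by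
    field_simp
    ring
  linear_combination (2 : QuvField) ^ (2 * (3 + m)) * hT
    + ((1 - uu) ^ (3 + m) * (1 - vv) ^ (3 + m)) * hA
    + ((1 + uu) ^ (3 + m) * (1 + vv) ^ (3 + m)) * hB
end
end

section
/- Fix an integer g ≥ 3 and define, for real (or complex) numbers u, v with 1−uv ≠ 0, 1−(uv)² ≠ 0 and 1+uv ≠ 0, the value E_g(u,v) = [(1−u²v)^g(1−uv²)^g − (uv)^{g+1}(1−u)^g(1−v)^g]/((1−uv)(1−(uv)²)) − ((uv)^{g−1}/2)·[(1−u)^g(1−v)^g/(1−uv) − (1+u)^g(1+v)^g/(1+uv)]. Then E_g(u,v) tends to 4^{g−1} as (u,v) tends to (1,1) within the set of points where these denominators are nonzero. -/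
noncomputable section

/-- The closed-form stringy E-function of `M_0` for genus `g`, as a function of real
variables `u = p.1`, `v = p.2` (defined where the denominators do not vanish). -/
def Estringy (g : ℕ) (p : ℝ × ℝ) : ℝ :=
  ((1 - p.1 ^ 2 * p.2) ^ g * (1 - p.1 * p.2 ^ 2) ^ g
      - (p.1 * p.2) ^ (g + 1) * (1 - p.1) ^ g * (1 - p.2) ^ g)
    / ((1 - p.1 * p.2) * (1 - (p.1 * p.2) ^ 2))
  - ((p.1 * p.2) ^ (g - 1) / 2) *
      ((1 - p.1) ^ g * (1 - p.2) ^ g / (1 - p.1 * p.2)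
        - (1 + p.1) ^ g * (1 + p.2) ^ g / (1 + p.1 * p.2))

lemma expand2 (n : ℕ) (x s : ℝ) :
    (x + s) ^ (n + 2) = x ^ (n + 2) + (n + 2) * x ^ (n + 1) * s
      + s ^ 2 * ∑ k ∈ Finset.range (n + 1),
          ((n + 2).choose (k + 2) : ℝ) * x ^ (n - k) * s ^ k := by
  rw [show x + s = s + x by ring, add_pow, Finset.sum_range_succ', Finset.sum_range_succ']
  have h1 : ∀ k ∈ Finset.range (n + 1),
      s ^ (k + 1 + 1) * x ^ (n + 2 - (k + 1 + 1)) * ((n + 2).choose (k + 1 + 1) : ℝ)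
        = s ^ 2 * (((n + 2).choose (k + 2) : ℝ) * x ^ (n - k) * s ^ k) := by
    intro k hk
    have h2 : n + 2 - (k + 1 + 1) = n - k := by omega
    rw [h2]; ring
  rw [Finset.sum_congr rfl h1, ← Finset.mul_sum]
  simp [Nat.choose_one_right]
  ring

/-- `((1-u) + u(1-uv))^(m+3)` tail coefficient sum. -/
def Af (m : ℕ) (p : ℝ × ℝ) : ℝ :=
  ∑ k ∈ Finset.range (m + 2),
    ((m + 3).choose (k + 2) : ℝ) * (1 - p.1) ^ (m + 1 - k) * (p.1 * (1 - p.1 * p.2)) ^ k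

def Bf (m : ℕ) (p : ℝ × ℝ) : ℝ :=
  ∑ k ∈ Finset.range (m + 2),
    ((m + 3).choose (k + 2) : ℝ) * (1 - p.2) ^ (m + 1 - k) * (p.2 * (1 - p.1 * p.2)) ^ k

def Sf (m : ℕ) (p : ℝ × ℝ) : ℝ := ∑ k ∈ Finset.range (m + 2), (p.1 * p.2) ^ k

def Qf (m : ℕ) (p : ℝ × ℝ) : ℝ :=
  ∑ k ∈ Finset.range (m + 3),
    ((m + 4).choose (k + 2) : ℝ) * (1 : ℝ) ^ (m + 2 - k) * (-(1 - p.1 * p.2)) ^ k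

/-- The continuous extension of `Estringy (m+3)` near `(1,1)`. -/
def Gf (m : ℕ) (p : ℝ × ℝ) : ℝ :=
  (2 * ((1 - p.1) ^ (m + 3) * p.2 ^ 2 * Bf m p + (1 - p.2) ^ (m + 3) * p.1 ^ 2 * Af m p
      + ((m : ℝ) + 3) ^ 2 * (1 - p.1) ^ (m + 2) * (1 - p.2) ^ (m + 2) * p.1 * p.2
      + (1 - p.1 * p.2) * (((m : ℝ) + 3) * (1 - p.1) ^ (m + 2) * p.1 * p.2 ^ 2 * Bf m p
          + ((m : ℝ) + 3) * (1 - p.2) ^ (m + 2) * p.2 * p.1 ^ 2 * Af m p)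
      + (1 - p.1 * p.2) ^ 2 * p.1 ^ 2 * p.2 ^ 2 * Af m p * Bf m p)
    + 2 * ((m : ℝ) + 3) * (1 - p.1) ^ (m + 2) * (1 - p.2) ^ (m + 2)
    - 2 * ((1 - p.1) ^ (m + 3) * (1 - p.2) ^ (m + 3)) * Qf m p
    + (1 - p.1) ^ (m + 3) * (1 - p.2) ^ (m + 3)
    + (2 - (1 - p.1 * p.2)) * Sf m p * ((1 - p.1) ^ (m + 3) * (1 - p.2) ^ (m + 3))
    + (p.1 * p.2) ^ (m + 2) * (1 + p.1) ^ (m + 3) * (1 + p.2) ^ (m + 3))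
  / (2 * (2 - (1 - p.1 * p.2)))

set_option maxHeartbeats 2000000 in
lemma key_identity (m : ℕ) (p : ℝ × ℝ) (h1 : (1 - p.1 * p.2) ≠ 0)
    (h2 : (1 - (p.1 * p.2) ^ 2) ≠ 0) (h3 : (1 + p.1 * p.2) ≠ 0) :
    Estringy (m + 3) p = Gf m p := by
  obtain ⟨u, v⟩ := p
  simp only at h1 h2 h3
  have h4 : (2 : ℝ) - (1 - u * v) ≠ 0 := by
    intro h; apply h3; linarith
  simp only [Estringy, Gf]
  have ea : (1 - u ^ 2 * v) ^ (m + 3)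
      = (1 - u) ^ (m + 3) + ((m : ℝ) + 3) * (1 - u) ^ (m + 2) * (u * (1 - u * v))
        + (u * (1 - u * v)) ^ 2 * Af m (u, v) := by
    have := expand2 (m + 1) (1 - u) (u * (1 - u * v))
    rw [show (1 - u) + u * (1 - u * v) = 1 - u ^ 2 * v by ring] at this
    rw [this]; push_cast [Af]; ring
  have eb : (1 - u * v ^ 2) ^ (m + 3)
      = (1 - v) ^ (m + 3) + ((m : ℝ) + 3) * (1 - v) ^ (m + 2) * (v * (1 - u * v))
        + (v * (1 - u * v)) ^ 2 * Bf m (u, v) := by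
    have := expand2 (m + 1) (1 - v) (v * (1 - u * v))
    rw [show (1 - v) + v * (1 - u * v) = 1 - u * v ^ 2 by ring] at this
    rw [this]; push_cast [Bf]; ring
  have euv1 : (u * v) ^ (m + 4)
      = 1 - ((m : ℝ) + 4) * (1 - u * v) + (1 - u * v) ^ 2 * Qf m (u, v) := by
    have := expand2 (m + 2) 1 (-(1 - u * v))
    rw [show (1 : ℝ) + -(1 - u * v) = u * v by ring] at this
    rw [this]; push_cast [Qf]; ring
  have euv2 : (u * v) ^ (m + 2) = 1 - (1 - u * v) * Sf m (u, v) := by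
    have := geom_sum_mul (u * v) (m + 2)
    simp only [Sf]
    nlinarith [this]
  rw [show m + 3 + 1 = m + 4 by ring, show m + 3 - 1 = m + 2 by omega]
  rw [ea, eb, euv1, euv2]
  have h2' : 1 - u ^ 2 * v ^ 2 ≠ 0 := by rwa [mul_pow] at h2
  field_simp [h4]
  ring

@[fun_prop]
lemma contAf (m : ℕ) : Continuous (Af m) := by
  unfold Af
  exact continuous_finset_sum _ (fun i _ => by fun_prop)

@[fun_prop]
lemma contBf (m : ℕ) : Continuous (Bf m) := by
  unfold Bf
  exact continuous_finset_sum _ (fun i _ => by fun_prop)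

@[fun_prop]
lemma contSf (m : ℕ) : Continuous (Sf m) := by
  unfold Sf
  exact continuous_finset_sum _ (fun i _ => by fun_prop)

@[fun_prop]
lemma contQf (m : ℕ) : Continuous (Qf m) := by
  unfold Qf
  exact continuous_finset_sum _ (fun i _ => by fun_prop)

lemma Af_one (m : ℕ) : Af m (1, 1) = 0 := by
  unfold Af
  apply Finset.sum_eq_zero
  intro k hk
  rcases k with _ | k
  · norm_num
  · norm_num

lemma Bf_one (m : ℕ) : Bf m (1, 1) = 0 := by
  unfold Bf
  apply Finset.sum_eq_zero
  intro k hk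
  rcases k with _ | k
  · norm_num
  · norm_num

lemma Gf_one (m : ℕ) : Gf m (1, 1) = (4 : ℝ) ^ (m + 2) := by
  have h2 : ((2:ℝ))^(m+3) * 2^(m+3) = 4 * 4^(m+2) := by
    rw [← pow_add, show m+3+(m+3) = 2*(m+2)+2 by ring, pow_add, pow_mul]
    norm_num
    ring
  simp only [Gf, Af_one, Bf_one]
  norm_num
  rw [h2]
  ring

lemma contGf (m : ℕ) : ContinuousAt (Gf m) (1, 1) := by
  unfold Gf
  apply ContinuousAt.div
  · fun_prop
  · fun_prop
  · norm_num

theorem stringy_euler_number (g : ℕ) (hg : 3 ≤ g) :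
    Filter.Tendsto (Estringy g)
      (nhdsWithin ((1 : ℝ), (1 : ℝ))
        {p : ℝ × ℝ | (1 - p.1 * p.2) ≠ 0 ∧ (1 - (p.1 * p.2) ^ 2) ≠ 0 ∧ (1 + p.1 * p.2) ≠ 0})
      (nhds ((4 : ℝ) ^ (g - 1))) := by
  obtain ⟨m, rfl⟩ : ∃ m, g = m + 3 := ⟨g - 3, by omega⟩
  have h0 : Filter.Tendsto (Gf m)
      (nhdsWithin ((1 : ℝ), (1 : ℝ))
        {p : ℝ × ℝ | (1 - p.1 * p.2) ≠ 0 ∧ (1 - (p.1 * p.2) ^ 2) ≠ 0 ∧ (1 + p.1 * p.2) ≠ 0})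
      (nhds ((4 : ℝ) ^ (m + 2))) := by
    rw [← Gf_one m]
    exact ((contGf m).tendsto).mono_left nhdsWithin_le_nhds
  have heq : ∀ᶠ p in nhdsWithin ((1 : ℝ), (1 : ℝ))
      {p : ℝ × ℝ | (1 - p.1 * p.2) ≠ 0 ∧ (1 - (p.1 * p.2) ^ 2) ≠ 0 ∧ (1 + p.1 * p.2) ≠ 0},
      Gf m p = Estringy (m + 3) p := by
    filter_upwards [self_mem_nhdsWithin] with p hp
    exact (key_identity m p hp.1 hp.2.1 hp.2.2).symm
  have h1 := Filter.Tendsto.congr' heq h0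
  rw [show m + 3 - 1 = m + 2 from rfl]
  exact h1

end
end

section
/- Let V be a vector space over ℂ and let a, b, c ∈ V be vectors that are linearly dependent over ℂ (i.e. the family (a,b,c) is not linearly independent). Then there exist complex numbers p, q, r, s with ps − qr = 1 such that either (ps+qr)·a − (pr)·b + (qs)·c = 0, or (p²)·b − (q²)·c − (2pq)·a = 0. -/
theorem conjugate_to_zero_diagonal_or_lower_triangular
    (V : Type*) [AddCommGroup V] [Module ℂ V] (a b c : V)
    (hdep : ¬ LinearIndependent ℂ ![a, b, c]) :
    ∃ p q r s : ℂ, p * s - q * r = 1 ∧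
      ((p * s + q * r) • a - (p * r) • b + (q * s) • c = 0 ∨
        (p ^ 2) • b - (q ^ 2) • c - (2 * p * q) • a = 0) := by
  rw [Fintype.not_linearIndependent_iff] at hdep
  obtain ⟨g, hsum, i, hi⟩ := hdep
  set x := g 0 with hx0
  set y := g 1 with hy0
  set z := g 2 with hz0
  have hrel : x • a + y • b + z • c = 0 := by
    simpa [Fin.sum_univ_three, add_assoc] using hsum
  by_cases hd : x ^ 2 + 4 * y * z = 0
  · -- use the lower-triangular branch
    by_cases hy : y = 0
    · have hx : x = 0 := by
        have h2 : x ^ 2 = 0 := by linear_combination hd - 4 * z * hy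
        exact (pow_eq_zero_iff two_ne_zero).mp h2
      have hz : z ≠ 0 := by
        intro hz
        fin_cases i <;> simp_all
      obtain ⟨q, hq⟩ := IsAlgClosed.exists_pow_nat_eq (k := ℂ) (-z) (n := 2) two_pos
      have hq0 : q ≠ 0 := by
        intro h
        apply hz
        have h1 : -z = 0 := by rw [← hq, h]; ring
        exact neg_eq_zero.mp h1
      refine ⟨0, q, -(1/q), 0, by field_simp; norm_num, Or.inr ?_⟩
      have key : (0:ℂ) ^ 2 • b - q ^ 2 • c - (2 * 0 * q) • a = -(q ^ 2 • c) := by module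
      rw [key, hq]
      have : x • a + y • b + z • c = z • c := by rw [hx, hy]; module
      rw [this] at hrel
      rw [neg_smul, neg_neg, hrel]
    · obtain ⟨p, hp⟩ := IsAlgClosed.exists_pow_nat_eq (k := ℂ) y (n := 2) two_pos
      have hp0 : p ≠ 0 := by
        intro h; apply hy; rw [← hp, h]; ring
      refine ⟨p, -x / (2 * p), 0, 1 / p, by field_simp; ring, Or.inr ?_⟩
      have h2 : (-x / (2 * p)) ^ 2 = -z := by
        field_simp
        linear_combination hd + 4 * z * hp
      have h3 : 2 * p * (-x / (2 * p)) = -x := by field_simp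
      rw [hp, h2, h3]
      have key : y • b - (-z) • c - (-x) • a = x • a + y • b + z • c := by module
      rw [key, hrel]
  · -- use the zero-diagonal branch
    obtain ⟨μ, hμ2⟩ := IsAlgClosed.exists_pow_nat_eq (k := ℂ) (x ^ 2 + 4 * y * z) (n := 2) two_pos
    have hμ0 : μ ≠ 0 := by
      intro h; apply hd; rw [← hμ2, h]; ring
    by_cases hy : y = 0
    · have hx : x ≠ 0 := by
        intro h
        apply hd
        rw [h, hy]; ring
      refine ⟨1, z / x, 0, 1, by norm_num, Or.inl ?_⟩
      rw [hy] at hrel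
      have key : ((1:ℂ) * 1 + z / x * 0) • a - ((1:ℂ) * 0) • b + (z / x * 1) • c =
          (x⁻¹ : ℂ) • (x • a + (0:ℂ) • b + z • c) := by
        match_scalars <;> field_simp <;> ring
      rw [key, hrel, smul_zero]
    · refine ⟨1, (μ - x) / (2 * y), -y / μ, (x + μ) / (2 * μ), ?_, Or.inl ?_⟩
      · field_simp
        ring
      · have key : ((1:ℂ) * ((x + μ) / (2 * μ)) + (μ - x) / (2 * y) * (-y / μ)) • a -
            ((1:ℂ) * (-y / μ)) • b + ((μ - x) / (2 * y) * ((x + μ) / (2 * μ))) • c =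
            (μ⁻¹ : ℂ) • (x • a + y • b + z • c) := by
          match_scalars
          · field_simp
            ring
          · field_simp
          · field_simp
            linear_combination hμ2
        rw [key, hrel, smul_zero]
end
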